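/- Let A = √(8/3). Suppose ρ₁, u₁⁽¹⁾, θ₁, φ₁, ρ₂, u₁⁽²⁾, θ₂, φ₂, ρ₃, u₁⁽³⁾, θ₃, φ₃, h₁¹ are smooth real-valued functions of (t,x) ∈ ℝ×ℝ satisfying at every point: u₁⁽¹⁾ = Aρ₁, θ₁ = (2/3)ρ₁, φ₁ = ρ₁; u₁⁽²⁾ = Aρ₂ + h₁¹ with ∂ₓh₁¹ = −[∂ₜρ₁ + ∂ₓ(ρ₁u₁⁽¹⁾)]; θ₂ = (2/3)ρ₂ − (1/9)ρ₁²; φ₂ = ρ₂ + ∂ₓ²ρ₁ − (1/2)ρ₁²; the equation ∂ₜu₁⁽¹⁾ − A∂ₓu₁⁽²⁾ − Aρ₁∂ₓu₁⁽¹⁾ + u₁⁽¹⁾∂ₓu₁⁽¹⁾ + ∂ₓθ₂ + ∂ₓρ₂ + ∂ₓ(ρ₁θ₁) + ∂ₓφ₂ + ρ₁∂ₓφ₁ = 0; the equation ∂ₜρ₂ − A∂ₓρ₃ + ∂ₓu₁⁽³⁾ + ∂ₓ(ρ₁u₁⁽²⁾) + ∂ₓ(ρ₂u₁⁽¹⁾)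 = 0; the equation ∂ₜu₁⁽²⁾ + ρ₁∂ₜu₁⁽¹⁾ − A∂ₓu₁⁽³⁾ − Aρ₁∂ₓu₁⁽²⁾ − Aρ₂∂ₓu₁⁽¹⁾ + ∂ₓ(u₁⁽¹⁾u₁⁽²⁾) + ρ₁u₁⁽¹⁾∂ₓu₁⁽¹⁾ + ∂ₓθ₃ + ∂ₓρ₃ + ∂ₓ(ρ₁θ₂) + ∂ₓ(ρ₂θ₁) + ∂ₓφ₃ + ρ₂∂ₓφ₁ + ρ₁∂ₓφ₂ = 0; and the equation ∂ₓ²φ₂ − φ₃ − φ₁φ₂ − (1/6)φ₁³ + ρ₃ = 0. Then at every point 2A∂ₜρ₂ − (2/3)∂ₓρ₃ + ∂ₓθ₃ + (20/3)∂ₓ(ρ₁ρ₂) + ∂ₓ³ρ₂ = h₂¹, where h₂¹ := −Aρ₁²∂ₓu₁⁽¹⁾ + ρ₁∂ₓ(ρ₁θ₁) + ρ₁²∂ₓφ₁ + ∂ₓ((1/6)φ₁³) − ∂ₜh₁¹ − 2A∂ₓ(ρ₁h₁¹) + (1/9)ρ₁²∂ₓρ₁ − ∂ₓ³(∂ₓ²ρ₁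 − (1/2)ρ₁²) + ∂ₓ(ρ₁∂ₓ²ρ₁) − ∂ₓ((1/2)ρ₁³). -/

import Mathlib

/-!
Substituting the constitutive relations for `u₁, θ₁, φ₁, u₂, θ₂, φ₂` and expanding every
derivative by the Leibniz rule turns all four equations and the claim into polynomial identities
in the jets of `ρ₁, ρ₂, ρ₃, h₁, u₃, θ₃, φ₃`. The claim is then the combination
`A · eqa + eqb + ∂ₓ eqd − ρ₁ · eq2` of the mass, second-order momentum, Poisson and first-order
momentum equations, up to a multiple of `A² − 8/3`.
-/

/-- Partial derivative in `t` of a function of `(t, x) : ℝ × ℝ`. -/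
noncomputable def pdt (f : ℝ × ℝ → ℝ) (p : ℝ × ℝ) : ℝ :=
  deriv (fun s => f (s, p.2)) p.1

/-- Partial derivative in `x` of a function of `(t, x) : ℝ × ℝ`. -/
noncomputable def pdx (f : ℝ × ℝ → ℝ) (p : ℝ × ℝ) : ℝ :=
  deriv (fun y => f (p.1, y)) p.2

open scoped ContDiff

section PartialDerivatives

variable {f g : ℝ × ℝ → ℝ}

theorem DifferentiableAt.t_slice {p : ℝ × ℝ} (hf : DifferentiableAt ℝ f p) :
    DifferentiableAt ℝ (fun s => f (s, p.2)) p.1 :=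
  hf.comp p.1 (differentiableAt_id.prodMk (differentiableAt_const p.2))

theorem DifferentiableAt.x_slice {p : ℝ × ℝ} (hf : DifferentiableAt ℝ f p) :
    DifferentiableAt ℝ (fun y => f (p.1, y)) p.2 :=
  hf.comp p.2 ((differentiableAt_const p.1).prodMk differentiableAt_id)

theorem pdx_eq_fderiv {p : ℝ × ℝ} (hf : DifferentiableAt ℝ f p) :
    pdx f p = fderiv ℝ f p (0, 1) := by
  have hslice : HasDerivAt (fun y : ℝ => (p.1, y)) (0, 1) p.2 :=
    (hasDerivAt_const p.2 p.1).prodMk (hasDerivAt_id p.2)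
  exact (hf.hasFDerivAt.comp_hasDerivAt p.2 hslice).deriv

theorem contDiff_pdx {n : WithTop ℕ∞} (hf : ContDiff ℝ (n + 1) f) : ContDiff ℝ n (pdx f) := by
  have hdiff : Differentiable ℝ f := hf.differentiable (by simp)
  rw [show pdx f = fun p => fderiv ℝ f p (0, 1) from funext fun p => pdx_eq_fderiv (hdiff p)]
  exact (hf.fderiv_right le_rfl).clm_apply contDiff_const

@[fun_prop]
theorem contDiff_infty_pdx (hf : ContDiff ℝ ∞ f) : ContDiff ℝ ∞ (pdx f) :=
  contDiff_pdx (by simpa using hf)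

theorem pdx_add (hf : Differentiable ℝ f) (hg : Differentiable ℝ g) :
    pdx (fun q => f q + g q) = fun q => pdx f q + pdx g q :=
  funext fun _ => deriv_add (hf _).x_slice (hg _).x_slice

theorem pdx_sub (hf : Differentiable ℝ f) (hg : Differentiable ℝ g) :
    pdx (fun q => f q - g q) = fun q => pdx f q - pdx g q :=
  funext fun _ => deriv_sub (hf _).x_slice (hg _).x_slice

theorem pdx_mul (hf : Differentiable ℝ f) (hg : Differentiable ℝ g) :
    pdx (fun q => f q * g q) = fun q => pdx f q * g q + f q * pdx g q :=
  funext fun _ => deriv_mul (hf _).x_slice (hg _).x_slice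

theorem pdx_pow (n : ℕ) (hf : Differentiable ℝ f) :
    pdx (fun q => f q ^ n) = fun q => n * f q ^ (n - 1) * pdx f q :=
  funext fun _ => deriv_fun_pow (hf _).x_slice n

theorem pdx_const (c : ℝ) : pdx (fun _ => c) = fun _ => 0 :=
  funext fun _ => deriv_const _ c

theorem pdt_add (hf : Differentiable ℝ f) (hg : Differentiable ℝ g) :
    pdt (fun q => f q + g q) = fun q => pdt f q + pdt g q :=
  funext fun _ => deriv_add (hf _).t_slice (hg _).t_slice

theorem pdt_const_mul (c : ℝ) (hf : Differentiable ℝ f) :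
    pdt (fun q => c * f q) = fun q => c * pdt f q :=
  funext fun _ => deriv_const_mul c (hf _).t_slice

end PartialDerivatives

theorem third_order_momentum_combination_general
    (A : ℝ) (hA : A = Real.sqrt (8 / 3))
    (ρ₁ u₁ θ₁ φ₁ ρ₂ u₂ θ₂ φ₂ ρ₃ u₃ θ₃ φ₃ h₁ : ℝ × ℝ → ℝ)
    (hρ₁ : ContDiff ℝ (⊤ : ℕ∞) ρ₁)
    (hρ₂ : ContDiff ℝ (⊤ : ℕ∞) ρ₂)
    (hρ₃ : ContDiff ℝ (⊤ : ℕ∞) ρ₃)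
    (hφ₃ : ContDiff ℝ (⊤ : ℕ∞) φ₃)
    (hh₁ : ContDiff ℝ (⊤ : ℕ∞) h₁)
    (rel_u₁ : ∀ p, u₁ p = A * ρ₁ p)
    (rel_θ₁ : ∀ p, θ₁ p = (2 / 3) * ρ₁ p)
    (rel_φ₁ : ∀ p, φ₁ p = ρ₁ p)
    (rel_u₂ : ∀ p, u₂ p = A * ρ₂ p + h₁ p)
    (rel_θ₂ : ∀ p, θ₂ p = (2 / 3) * ρ₂ p - (1 / 9) * (ρ₁ p) ^ 2)
    (rel_φ₂ : ∀ p, φ₂ p = ρ₂ p + pdx (pdx ρ₁) p - (1 / 2) * (ρ₁ p) ^ 2)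
    (eq2 : ∀ p, pdt u₁ p - A * pdx u₂ p - A * ρ₁ p * pdx u₁ p + u₁ p * pdx u₁ p
      + pdx θ₂ p + pdx ρ₂ p + pdx (fun q => ρ₁ q * θ₁ q) p + pdx φ₂ p
      + ρ₁ p * pdx φ₁ p = 0)
    (eqa : ∀ p, pdt ρ₂ p - A * pdx ρ₃ p + pdx u₃ p
      + pdx (fun q => ρ₁ q * u₂ q) p + pdx (fun q => ρ₂ q * u₁ q) p = 0)
    (eqb : ∀ p, pdt u₂ p + ρ₁ p * pdt u₁ p - A * pdx u₃ p - A * ρ₁ p * pdx u₂ p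
      - A * ρ₂ p * pdx u₁ p + pdx (fun q => u₁ q * u₂ q) p
      + ρ₁ p * u₁ p * pdx u₁ p + pdx θ₃ p + pdx ρ₃ p
      + pdx (fun q => ρ₁ q * θ₂ q) p + pdx (fun q => ρ₂ q * θ₁ q) p
      + pdx φ₃ p + ρ₂ p * pdx φ₁ p + ρ₁ p * pdx φ₂ p = 0)
    (eqd : ∀ p, pdx (pdx φ₂) p - φ₃ p - φ₁ p * φ₂ p - (1 / 6) * (φ₁ p) ^ 3
      + ρ₃ p = 0) :
    ∀ p, 2 * A * pdt ρ₂ p - (2 / 3) * pdx ρ₃ p + pdx θ₃ p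
        + (20 / 3) * pdx (fun q => ρ₁ q * ρ₂ q) p + pdx (pdx (pdx ρ₂)) p
      = -(A * (ρ₁ p) ^ 2 * pdx u₁ p) + ρ₁ p * pdx (fun q => ρ₁ q * θ₁ q) p
          + (ρ₁ p) ^ 2 * pdx φ₁ p + pdx (fun q => (1 / 6) * (φ₁ q) ^ 3) p
          - pdt h₁ p - 2 * A * pdx (fun q => ρ₁ q * h₁ q) p
          + (1 / 9) * (ρ₁ p) ^ 2 * pdx ρ₁ p
          - pdx (pdx (pdx (fun q => pdx (pdx ρ₁) q - (1 / 2) * (ρ₁ q) ^ 2))) p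
          + pdx (fun q => ρ₁ q * pdx (pdx ρ₁) q) p
          - pdx (fun q => (1 / 2) * (ρ₁ q) ^ 3) p := by
  intro p
  have hA_sq : A ^ 2 = 8 / 3 := hA ▸ Real.sq_sqrt (by norm_num)
  obtain rfl : u₁ = fun q => A * ρ₁ q := funext rel_u₁
  obtain rfl : θ₁ = fun q => 2 / 3 * ρ₁ q := funext rel_θ₁
  obtain rfl : φ₁ = fun q => ρ₁ q := funext rel_φ₁
  obtain rfl : u₂ = fun q => A * ρ₂ q + h₁ q := funext rel_u₂
  obtain rfl : θ₂ = fun q => 2 / 3 * ρ₂ q - 1 / 9 * ρ₁ q ^ 2 := funext rel_θ₂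
  obtain rfl : φ₂ = fun q => ρ₂ q + pdx (pdx ρ₁) q - 1 / 2 * ρ₁ q ^ 2 := funext rel_φ₂
  have poisson_x := congrFun (congrArg pdx (funext eqd)) p
  simp (disch := fun_prop (disch := simp)) only [pdx_add, pdx_sub, pdx_mul, pdx_pow,
    pdx_const, pdt_add, pdt_const_mul] at eq2 eqa eqb poisson_x ⊢
  linear_combination A * eqa p + eqb p + poisson_x - ρ₁ p * eq2 p
    + (pdx ρ₃ p - 2 * pdx ρ₁ p * ρ₂ p - 3 * ρ₁ p * pdx ρ₂ p) * hA_sq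

/-- the identity
`2A∂ₜρ₂ − (2/3)∂ₓρ₃ + ∂ₓθ₃ + (20/3)∂ₓ(ρ₁ρ₂) + ∂ₓ³ρ₂ = h₂¹`
obtained from the third-order momentum, mass and Poisson equations. -/
theorem third_order_momentum_combination
    (A : ℝ) (hA : A = Real.sqrt (8 / 3))
    (ρ₁ u₁ θ₁ φ₁ ρ₂ u₂ θ₂ φ₂ ρ₃ u₃ θ₃ φ₃ h₁ : ℝ × ℝ → ℝ)
    (hρ₁ : ContDiff ℝ (⊤ : ℕ∞) ρ₁) (hu₁ : ContDiff ℝ (⊤ : ℕ∞) u₁)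
    (hθ₁ : ContDiff ℝ (⊤ : ℕ∞) θ₁) (hφ₁ : ContDiff ℝ (⊤ : ℕ∞) φ₁)
    (hρ₂ : ContDiff ℝ (⊤ : ℕ∞) ρ₂) (hu₂ : ContDiff ℝ (⊤ : ℕ∞) u₂)
    (hθ₂ : ContDiff ℝ (⊤ : ℕ∞) θ₂) (hφ₂ : ContDiff ℝ (⊤ : ℕ∞) φ₂)
    (hρ₃ : ContDiff ℝ (⊤ : ℕ∞) ρ₃) (hu₃ : ContDiff ℝ (⊤ : ℕ∞) u₃)
    (hθ₃ : ContDiff ℝ (⊤ : ℕ∞) θ₃) (hφ₃ : ContDiff ℝ (⊤ : ℕ∞) φ₃)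
    (hh₁ : ContDiff ℝ (⊤ : ℕ∞) h₁)
    (rel_u₁ : ∀ p, u₁ p = A * ρ₁ p)
    (rel_θ₁ : ∀ p, θ₁ p = (2 / 3) * ρ₁ p)
    (rel_φ₁ : ∀ p, φ₁ p = ρ₁ p)
    (rel_u₂ : ∀ p, u₂ p = A * ρ₂ p + h₁ p)
    (rel_h₁ : ∀ p, pdx h₁ p = -(pdt ρ₁ p + pdx (fun q => ρ₁ q * u₁ q) p))
    (rel_θ₂ : ∀ p, θ₂ p = (2 / 3) * ρ₂ p - (1 / 9) * (ρ₁ p) ^ 2)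
    (rel_φ₂ : ∀ p, φ₂ p = ρ₂ p + pdx (pdx ρ₁) p - (1 / 2) * (ρ₁ p) ^ 2)
    (eq2 : ∀ p, pdt u₁ p - A * pdx u₂ p - A * ρ₁ p * pdx u₁ p + u₁ p * pdx u₁ p
      + pdx θ₂ p + pdx ρ₂ p + pdx (fun q => ρ₁ q * θ₁ q) p + pdx φ₂ p
      + ρ₁ p * pdx φ₁ p = 0)
    (eqa : ∀ p, pdt ρ₂ p - A * pdx ρ₃ p + pdx u₃ p
      + pdx (fun q => ρ₁ q * u₂ q) p + pdx (fun q => ρ₂ q * u₁ q) p = 0)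
    (eqb : ∀ p, pdt u₂ p + ρ₁ p * pdt u₁ p - A * pdx u₃ p - A * ρ₁ p * pdx u₂ p
      - A * ρ₂ p * pdx u₁ p + pdx (fun q => u₁ q * u₂ q) p
      + ρ₁ p * u₁ p * pdx u₁ p + pdx θ₃ p + pdx ρ₃ p
      + pdx (fun q => ρ₁ q * θ₂ q) p + pdx (fun q => ρ₂ q * θ₁ q) p
      + pdx φ₃ p + ρ₂ p * pdx φ₁ p + ρ₁ p * pdx φ₂ p = 0)
    (eqd : ∀ p, pdx (pdx φ₂) p - φ₃ p - φ₁ p * φ₂ p - (1 / 6) * (φ₁ p) ^ 3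
      + ρ₃ p = 0) :
    ∀ p, 2 * A * pdt ρ₂ p - (2 / 3) * pdx ρ₃ p + pdx θ₃ p
        + (20 / 3) * pdx (fun q => ρ₁ q * ρ₂ q) p + pdx (pdx (pdx ρ₂)) p
      = -(A * (ρ₁ p) ^ 2 * pdx u₁ p) + ρ₁ p * pdx (fun q => ρ₁ q * θ₁ q) p
          + (ρ₁ p) ^ 2 * pdx φ₁ p + pdx (fun q => (1 / 6) * (φ₁ q) ^ 3) p
          - pdt h₁ p - 2 * A * pdx (fun q => ρ₁ q * h₁ q) p
          + (1 / 9) * (ρ₁ p) ^ 2 * pdx ρ₁ p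
          - pdx (pdx (pdx (fun q => pdx (pdx ρ₁) q - (1 / 2) * (ρ₁ q) ^ 2))) p
          + pdx (fun q => ρ₁ q * pdx (pdx ρ₁) q) p
          - pdx (fun q => (1 / 2) * (ρ₁ q) ^ 3) p :=
  third_order_momentum_combination_general A hA ρ₁ u₁ θ₁ φ₁ ρ₂ u₂ θ₂ φ₂ ρ₃ u₃ θ₃ φ₃ h₁ hρ₁ hρ₂ hρ₃
    hφ₃ hh₁ rel_u₁ rel_θ₁ rel_φ₁ rel_u₂ rel_θ₂ rel_φ₂ eq2 eqa eqb eqd
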